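/- arXiv:1801.09980 — 2 statements merged into one kernel-verified Lean document; each statement's English description precedes it below -/
import Mathlib

section
/- Let X, Y be two-dimensional smooth real Banach spaces with Y strictly convex. Let T : X → Y be a rank one operator with ‖T‖ = 1 attaining its norm at a unit vector x. If (x, Tx) is not a CPP, then T is an extreme contraction. -/
/-!
Suppose `T = α A + β B` with `A ≠ B` in the unit ball. Since `T x` is a unit vector of the strictly
convex space `Y`, `A x = B x = T x`. Let `f`, `g` be the supporting functionals at `x` and `T x`;
by smoothness of `X`, `g ∘ A = g ∘ T = f`. For a unit vector `z ∈ ker f` we get `x ⊥_B z`, rank one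
forces `T z = 0`, so `B z = -κ A z` with `κ > 0`, and `A z ≠ 0`, `T x ⊥_B A z`. For a unit vector
`a x + b z`, the vectors `a T x + b A z` and `a T x - κ b A z` are its images under `A` and `B`,
so by convexity of the ball `a T x ± min 1 κ • b A z` has norm at most `1`. In a smooth plane the
unit vectors orthogonal to a given one are `±z`, so this is the CPP condition with
`μ = min 1 κ * ‖A z‖`.
-/

open Metric

/-- Birkhoff-James orthogonality: `x ⊥_B y` iff `‖x + t y‖ ≥ ‖x‖` for all real `t`. -/
def BJOrth {X : Type*} [NormedAddCommGroup X] [NormedSpace ℝ X] (x y : X) : Prop :=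
  ∀ t : ℝ, ‖x‖ ≤ ‖x + t • y‖

/-- `(x, y)` is a compatible point pair with constant `(r, μ)`. -/
def IsCPPConst {X Y : Type*} [NormedAddCommGroup X] [NormedSpace ℝ X]
    [NormedAddCommGroup Y] [NormedSpace ℝ Y] (x : X) (y : Y) (r μ : ℝ) : Prop :=
  ∀ z : X, ‖z‖ = 1 → BJOrth x z → ∀ w : Y, ‖w‖ = 1 → BJOrth y w →
    ∀ a b : ℝ, ‖a • x + b • z - x‖ ≤ r → ‖a • x + b • z‖ = 1 →
      ‖a • y + (b * μ) • w‖ ≤ 1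

/-- `(x, y)` is a compatible point pair (CPP). -/
def IsCPP {X Y : Type*} [NormedAddCommGroup X] [NormedSpace ℝ X]
    [NormedAddCommGroup Y] [NormedSpace ℝ Y] (x : X) (y : Y) : Prop :=
  ∃ r > 0, ∃ μ > 0, IsCPPConst x y r μ

/-- `(x, y)` is a weakly compatible point pair (weak CPP). -/
def IsWeakCPP {X Y : Type*} [NormedAddCommGroup X] [NormedSpace ℝ X]
    [NormedAddCommGroup Y] [NormedSpace ℝ Y] (x : X) (y : Y) : Prop :=
  ∃ z : X, ‖z‖ = 1 ∧ BJOrth x z ∧ ∃ w : Y, ‖w‖ = 1 ∧ BJOrth y w ∧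
    ∃ r > 0, ∃ μ > 0, ∀ a b : ℝ, ‖a • x + b • z - x‖ ≤ r → ‖a • x + b • z‖ = 1 →
      ‖a • y + (b * μ) • w‖ ≤ 1

/-- A normed space is smooth if every unit vector has a unique supporting functional. -/
def SmoothSp (X : Type*) [NormedAddCommGroup X] [NormedSpace ℝ X] : Prop :=
  ∀ x : X, ‖x‖ = 1 → ∃! f : X →L[ℝ] ℝ, ‖f‖ = 1 ∧ f x = 1

open Module Set

section Convexity
variable {E : Type*} [NormedAddCommGroup E] [NormedSpace ℝ E]

lemma norm_add_smul_le_one_of_mem_Icc {u e : E} {s t r : ℝ} (hs : ‖u + s • e‖ ≤ 1)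
    (ht : ‖u + t • e‖ ≤ 1) (hr : r ∈ Icc s t) : ‖u + r • e‖ ≤ 1 := by
  have hconv : Convex ℝ {r : ℝ | ‖u + r • e‖ ≤ 1} := by
    intro p hp q hq a b ha hb hab
    calc ‖u + (a • p + b • q) • e‖ = ‖a • (u + p • e) + b • (u + q • e)‖ := by
          nth_rewrite 1 [← one_smul ℝ u, ← hab]; congr 1; module
      _ ≤ a * ‖u + p • e‖ + b * ‖u + q • e‖ := by
          refine (norm_add_le _ _).trans_eq ?_
          rw [norm_smul, norm_smul, Real.norm_of_nonneg ha, Real.norm_of_nonneg hb]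
      _ ≤ a * 1 + b * 1 := by gcongr <;> assumption
      _ = 1 := by rw [mul_one, mul_one, hab]
  exact hconv.segment_subset hs ht (by rwa [segment_eq_Icc (hr.1.trans hr.2)])

lemma eq_of_mem_openSegment_of_norm_eq_one [StrictConvexSpace ℝ E] {u v y : E} (hu : ‖u‖ ≤ 1)
    (hv : ‖v‖ ≤ 1) (hy : y ∈ openSegment ℝ u v) (hy1 : ‖y‖ = 1) : u = y ∧ v = y := by
  obtain rfl : u = v := by
    by_contra hne
    obtain ⟨α, β, hα, hβ, hαβ, rfl⟩ := hy
    exact (norm_combo_lt_of_ne hu hv hne hα hβ hαβ).ne hy1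
  rw [openSegment_same, mem_singleton_iff] at hy
  exact ⟨hy.symm, hy.symm⟩

lemma exists_pos_eq_neg_smul_of_zero_mem_openSegment {u v : E} (h : (0 : E) ∈ openSegment ℝ u v) :
    ∃ κ : ℝ, 0 < κ ∧ v = -κ • u := by
  obtain ⟨α, β, hα, hβ, -, h⟩ := h
  refine ⟨α / β, div_pos hα hβ, ?_⟩
  rw [neg_smul, eq_neg_iff_add_eq_zero, ← smul_right_inj hβ.ne', smul_add, smul_smul,
    mul_div_cancel₀ _ hβ.ne', smul_zero, add_comm, h]

lemma ContinuousLinearMap.apply_mem_openSegment {X : Type*} [NormedAddCommGroup X]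
    [NormedSpace ℝ X] {A B T : X →L[ℝ] E} (h : T ∈ openSegment ℝ A B) (x : X) :
    T x ∈ openSegment ℝ (A x) (B x) := by
  obtain ⟨α, β, hα, hβ, hαβ, rfl⟩ := h
  exact ⟨α, β, hα, hβ, hαβ, rfl⟩

end Convexity

section SupportingFunctionals
variable {X : Type*} [NormedAddCommGroup X] [NormedSpace ℝ X]

lemma BJOrth.abs_mul_norm_le {x z : X} (h : BJOrth x z) (a c : ℝ) :
    |a| * ‖x‖ ≤ ‖a • x + c • z‖ := by
  rcases eq_or_ne a 0 with rfl | ha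
  · simp
  calc |a| * ‖x‖ ≤ |a| * ‖x + (c / a) • z‖ := by gcongr; exact h _
    _ = ‖a • x + c • z‖ := by
      rw [← Real.norm_eq_abs, ← norm_smul, smul_add, smul_smul, mul_div_cancel₀ _ ha]

lemma BJOrth.linearIndependent {x z : X} (h : BJOrth x z) (hx : x ≠ 0) (hz : z ≠ 0) :
    LinearIndependent ℝ ![x, z] := by
  refine LinearIndependent.pair_iff.2 fun a c hac => ?_
  obtain rfl : a = 0 := by
    have := h.abs_mul_norm_le a c
    rw [hac, norm_zero] at this
    exact abs_eq_zero.1 (le_antisymm (nonpos_of_mul_nonpos_left this (norm_pos_iff.2 hx))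
      (abs_nonneg a))
  simpa [hz] using hac

lemma bjOrth_of_apply_eq_zero {f : X →L[ℝ] ℝ} (hf : ‖f‖ ≤ 1) {x z : X} (hfx : f x = ‖x‖)
    (hfz : f z = 0) : BJOrth x z := fun t =>
  calc ‖x‖ = f (x + t • z) := by simp [hfx, hfz]
    _ ≤ ‖f (x + t • z)‖ := Real.le_norm_self _
    _ ≤ ‖x + t • z‖ := by simpa using f.le_of_opNorm_le hf (x + t • z)

lemma SmoothSp.eq_of_norm_le_one (hX : SmoothSp X) {x : X} (hx : ‖x‖ = 1) {f f' : X →L[ℝ] ℝ}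
    (hf : ‖f‖ ≤ 1) (hfx : f x = 1) (hf' : ‖f'‖ ≤ 1) (hf'x : f' x = 1) : f = f' := by
  have norm_eq {g : X →L[ℝ] ℝ} (hg : ‖g‖ ≤ 1) (hgx : g x = 1) : ‖g‖ = 1 :=
    hg.antisymm (by simpa [hgx, hx] using g.le_opNorm x)
  exact (hX x hx).unique ⟨norm_eq hf hfx, hfx⟩ ⟨norm_eq hf' hf'x, hf'x⟩

end SupportingFunctionals

lemma LinearMap.apply_eq_zero_of_rank_range_eq_one {K V W : Type*} [Field K] [AddCommGroup V]
    [Module K V] [AddCommGroup W] [Module K W] {T : V →ₗ[K] W}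
    (hT : Module.rank K (LinearMap.range T) = 1) (g : W →ₗ[K] K) {x z : V} (hx : g (T x) ≠ 0)
    (hz : g (T z) = 0) : T z = 0 := by
  have hTx : (⟨T x, x, rfl⟩ : LinearMap.range T) ≠ 0 := fun h =>
    hx (by rw [show T x = 0 from congrArg Subtype.val h, map_zero])
  obtain ⟨c, hc⟩ := (finrank_eq_one_iff_of_nonzero' _ hTx).1
    (finrank_eq_of_rank_eq (by simpa using hT)) ⟨T z, z, rfl⟩
  have hc' : c • T x = T z := by simpa [Subtype.ext_iff] using hc
  rw [← hc', map_smul, smul_eq_mul, mul_eq_zero] at hz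
  rw [← hc', hz.resolve_right hx, zero_smul]

section TwoDimensional
variable {X : Type*} [NormedAddCommGroup X] [NormedSpace ℝ X] [FiniteDimensional ℝ X]

lemma exists_norm_eq_one_apply_eq_zero (hd : 1 < finrank ℝ X) (f : X →L[ℝ] ℝ) :
    ∃ z : X, ‖z‖ = 1 ∧ f z = 0 := by
  obtain ⟨v, hv, hv0⟩ := Submodule.exists_mem_ne_zero_of_ne_bot
    (LinearMap.ker_ne_bot_of_finrank_lt (f := (f : X →ₗ[ℝ] ℝ)) (by rwa [finrank_self]))
  have hfv : f v = 0 := hv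
  exact ⟨‖v‖⁻¹ • v, norm_smul_inv_norm hv0, by simp [hfv]⟩

variable (hd : finrank ℝ X = 2)
include hd

lemma ContinuousLinearMap.ext_of_linearIndependent_pair {Y : Type*} [NormedAddCommGroup Y]
    [NormedSpace ℝ Y] {x z : X} (hxz : LinearIndependent ℝ ![x, z]) {A B : X →L[ℝ] Y}
    (hx : A x = B x) (hz : A z = B z) : A = B := by
  refine ContinuousLinearMap.coe_injective (LinearMap.ext_on_range
    (hxz.span_eq_top_of_card_eq_finrank' (by simp [hd])) fun i => ?_)
  fin_cases i <;> simpa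

lemma BJOrth.exists_dual {x z : X} (h : BJOrth x z) (hx : ‖x‖ = 1) (hz : z ≠ 0) :
    ∃ g : X →L[ℝ] ℝ, ‖g‖ ≤ 1 ∧ g x = 1 ∧ g z = 0 := by
  let b := basisOfLinearIndependentOfCardEqFinrank
    (h.linearIndependent (norm_ne_zero_iff.1 (by simp [hx])) hz) (by simp [hd])
  have hb0 : b 0 = x := by simp [b]
  have hb1 : b 1 = z := by simp [b]
  let g : X →L[ℝ] ℝ := LinearMap.toContinuousLinearMap (b.coord 0)
  refine ⟨g, g.opNorm_le_bound zero_le_one fun v => ?_, by simp [g, ← hb0], by simp [g, ← hb1]⟩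
  have hv := b.sum_repr v
  rw [Fin.sum_univ_two, hb0, hb1] at hv
  have hbound := h.abs_mul_norm_le (b.repr v 0) (b.repr v 1)
  rw [hx, mul_one, hv] at hbound
  simpa [g] using hbound

lemma SmoothSp.apply_eq_zero_of_bjOrth (hX : SmoothSp X) {x z : X} (hx : ‖x‖ = 1) (hz : z ≠ 0)
    (h : BJOrth x z) {f : X →L[ℝ] ℝ} (hf : ‖f‖ ≤ 1) (hfx : f x = 1) : f z = 0 := by
  obtain ⟨g, hg, hgx, hgz⟩ := h.exists_dual hd hx hz
  rw [hX.eq_of_norm_le_one hx hf hfx hg hgx, hgz]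

lemma eq_or_eq_neg_of_apply_eq_zero {f : X →L[ℝ] ℝ} (hf : f ≠ 0) {z z' : X} (hz : ‖z‖ = 1)
    (hz' : ‖z'‖ = 1) (hfz : f z = 0) (hfz' : f z' = 0) : z' = z ∨ z' = -z := by
  obtain ⟨a, rfl⟩ : ∃ a : ℝ, a • z = z' := by
    by_contra! hind
    exact hf (ContinuousLinearMap.ext_of_linearIndependent_pair hd
      ((LinearIndependent.pair_iff' (ne_zero_of_norm_ne_zero (by simp [hz]))).2 hind)
      (by simp [hfz]) (by simp [hfz']))
  have ha : |a| = 1 := by simpa [norm_smul, hz] using hz'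
  rcases (abs_eq zero_le_one).1 ha with rfl | rfl <;> simp

lemma SmoothSp.eq_or_eq_neg_of_bjOrth (hX : SmoothSp X) {x z z' : X} (hx : ‖x‖ = 1)
    (hz : ‖z‖ = 1) (hz' : ‖z'‖ = 1) (h : BJOrth x z) (h' : BJOrth x z') : z' = z ∨ z' = -z := by
  obtain ⟨f, ⟨hf, hfx⟩, -⟩ := hX x hx
  refine eq_or_eq_neg_of_apply_eq_zero hd (f := f) (by rintro rfl; simp at hfx) hz hz'
    (hX.apply_eq_zero_of_bjOrth hd hx (ne_zero_of_norm_ne_zero (by simp [hz])) h hf.le hfx)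
    (hX.apply_eq_zero_of_bjOrth hd hx (ne_zero_of_norm_ne_zero (by simp [hz'])) h' hf.le hfx)

end TwoDimensional

section CompatiblePointPair
variable {X Y : Type*} [NormedAddCommGroup X] [NormedSpace ℝ X] [FiniteDimensional ℝ X]
  [NormedAddCommGroup Y] [NormedSpace ℝ Y] [FiniteDimensional ℝ Y]
  (hX : SmoothSp X) (hY : SmoothSp Y) (hdX : finrank ℝ X = 2) (hdY : finrank ℝ Y = 2)
include hX hY hdX hdY

lemma isCPPConst_of_forall_sign {x z : X} {y w : Y} (hx : ‖x‖ = 1) (hy : ‖y‖ = 1)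
    (hz : ‖z‖ = 1) (hw : ‖w‖ = 1) (hxz : BJOrth x z) (hyw : BJOrth y w) {μ : ℝ}
    (h : ∀ a b : ℝ, ‖a • x + b • z‖ = 1 →
      ‖a • y + (b * μ) • w‖ ≤ 1 ∧ ‖a • y - (b * μ) • w‖ ≤ 1) (r : ℝ) :
    IsCPPConst x y r μ := by
  intro z' hz' hxz' w' hw' hyw' a b _ hab
  rcases hX.eq_or_eq_neg_of_bjOrth hdX hx hz hz' hxz hxz' with rfl | rfl <;>
    rcases hY.eq_or_eq_neg_of_bjOrth hdY hy hw hw' hyw hyw' with rfl | rfl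
  · exact (h a b hab).1
  · simpa [sub_eq_add_neg] using (h a b hab).2
  · simpa [sub_eq_add_neg] using (h a (-b) (by simpa using hab)).2
  · simpa using (h a (-b) (by simpa using hab)).1

lemma isCPP_of_contractions {A B : X →L[ℝ] Y} (hA : ‖A‖ ≤ 1) (hB : ‖B‖ ≤ 1) {x z : X}
    (hx : ‖x‖ = 1) (hz : ‖z‖ = 1) (hxz : BJOrth x z) (hAB : A x = B x) (hAx : ‖A x‖ = 1)
    {g : Y →L[ℝ] ℝ} (hg : ‖g‖ ≤ 1) (hgx : g (A x) = 1) (hgz : g (A z) = 0) (hAz : A z ≠ 0)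
    {κ : ℝ} (hκ : 0 < κ) (hBz : B z = -κ • A z) : IsCPP x (A x) := by
  set m := min 1 κ
  have hm : 0 < m := lt_min one_pos hκ
  have hw : ‖‖A z‖⁻¹ • A z‖ = 1 := norm_smul_inv_norm hAz
  have hyw : BJOrth (A x) (‖A z‖⁻¹ • A z) :=
    bjOrth_of_apply_eq_zero hg (hgx.trans hAx.symm) (by simp [hgz])
  refine ⟨1, one_pos, m * ‖A z‖, mul_pos hm (norm_pos_iff.2 hAz),
    isCPPConst_of_forall_sign hX hY hdX hdY hx hAx hz hw hxz hyw (fun a b hab => ?_) 1⟩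
  have hsmul : (b * (m * ‖A z‖)) • ‖A z‖⁻¹ • A z = m • b • A z := by
    rw [smul_smul, smul_smul]; congr 1; field_simp
  have hA' : ‖a • A x + (1 : ℝ) • b • A z‖ ≤ 1 := by
    simpa using (A.unit_le_opNorm _ hab.le).trans hA
  have hB' : ‖a • A x + (-κ) • b • A z‖ ≤ 1 := by
    have := (B.unit_le_opNorm _ hab.le).trans hB
    rwa [map_add, map_smul, map_smul, ← hAB, hBz, smul_comm] at this
  rw [hsmul, sub_eq_add_neg, ← neg_smul]
  exact ⟨norm_add_smul_le_one_of_mem_Icc hB' hA' ⟨by linarith, min_le_left 1 κ⟩,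
    norm_add_smul_le_one_of_mem_Icc hB' hA' ⟨neg_le_neg (min_le_right 1 κ), by linarith⟩⟩

end CompatiblePointPair

theorem stmt8 {X Y : Type*} [NormedAddCommGroup X] [NormedSpace ℝ X]
    [NormedAddCommGroup Y] [NormedSpace ℝ Y] [StrictConvexSpace ℝ Y]
    (hdX : Module.finrank ℝ X = 2) (hdY : Module.finrank ℝ Y = 2)
    [FiniteDimensional ℝ X] [FiniteDimensional ℝ Y]
    (hX : SmoothSp X) (hY : SmoothSp Y) (T : X →L[ℝ] Y) (hT : ‖T‖ = 1)
    (hrank : Module.rank ℝ (LinearMap.range (T : X →ₗ[ℝ] Y)) = 1)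
    (x : X) (hx : ‖x‖ = 1) (hTx : ‖T x‖ = 1)
    (hncpp : ¬ IsCPP x (T x)) :
    T ∈ Set.extremePoints ℝ (closedBall (0 : X →L[ℝ] Y) 1) := by
  refine ⟨mem_closedBall_zero_iff.2 hT.le, fun A hA B hB hTAB => ?_⟩
  rw [mem_closedBall_zero_iff] at hA hB
  by_contra hne
  have hAB : A ≠ B := by
    rintro rfl
    rw [openSegment_same, mem_singleton_iff] at hTAB
    exact hne hTAB.symm
  obtain ⟨hAx, hBx⟩ := eq_of_mem_openSegment_of_norm_eq_one
    ((A.unit_le_opNorm x hx.le).trans hA) ((B.unit_le_opNorm x hx.le).trans hB)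
    (ContinuousLinearMap.apply_mem_openSegment hTAB x) hTx
  obtain ⟨f, ⟨hf, hfx⟩, -⟩ := hX x hx
  obtain ⟨g, ⟨hg, hgy⟩, -⟩ := hY (T x) hTx
  obtain ⟨z, hz, hfz⟩ := exists_norm_eq_one_apply_eq_zero (hdX ▸ one_lt_two) f
  have hxz : BJOrth x z := bjOrth_of_apply_eq_zero hf.le (hfx.trans hx.symm) hfz
  have hgS {S : X →L[ℝ] Y} (hS : ‖S‖ ≤ 1) (hSx : S x = T x) : g (S z) = 0 := by
    have hgS_le : ‖g.comp S‖ ≤ 1 := (g.opNorm_comp_le S).trans (by rwa [hg, one_mul])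
    rw [← ContinuousLinearMap.comp_apply,
      hX.eq_of_norm_le_one hx hgS_le (by simp [hSx, hgy]) hf.le hfx, hfz]
  have hTz : T z = 0 := LinearMap.apply_eq_zero_of_rank_range_eq_one hrank (g : Y →ₗ[ℝ] ℝ)
    (x := x) (by simp [hgy]) (hgS hT.le rfl)
  obtain ⟨κ, hκ, hBz⟩ := exists_pos_eq_neg_smul_of_zero_mem_openSegment
    (hTz ▸ ContinuousLinearMap.apply_mem_openSegment hTAB z)
  have hAz : A z ≠ 0 := fun h => hAB <| ContinuousLinearMap.ext_of_linearIndependent_pair hdX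
    (hxz.linearIndependent (ne_zero_of_norm_ne_zero (by simp [hx]))
      (ne_zero_of_norm_ne_zero (by simp [hz])))
    (hAx.trans hBx.symm) (by simp [hBz, h])
  exact hncpp (hAx ▸ isCPP_of_contractions hX hY hdX hdY hA hB hx hz hxz (hAx.trans hBx.symm)
    (hAx ▸ hTx) hg.le (hAx ▸ hgy) (hgS hA hAx) hAz hκ hBz)
end

section
/- In L(ℓ₄², ℓ₄²), a rank one operator T with ‖T‖ = 1 is an extreme contraction if and only if its matrix with respect to the standard basis is of the form [[x₁, 0], [y₁, 0]] or [[0, x₁], [0, y₁]] with x₁y₁ ≠ 0 and x₁⁴ + y₁⁴ = 1. -/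
open Metric

instance : Fact ((1:ENNReal) ≤ 4) := ⟨by norm_num⟩

noncomputable abbrev L4 := PiLp 4 (fun _ : Fin 2 => ℝ)

/-!
Rank one means the columns `T e₀`, `T e₁` are multiples `a • y`, `b • y` of a unit vector
`y = (p, q)`.

If `a b ≠ 0`, write `a = α³`, `b = β³`: the functional `(a, b)` attains its norm at `(α, β)`, and
the perturbation `S x = ε (β x₀ - α x₁) • y⊥`, which vanishes there and moves `T x` along the
tangent `y⊥ = (-q³, p³)` of the unit sphere at `y` (whose normal is `(p³, q³)`), keeps
`‖T ± S‖ ≤ 1` for `ε = αβ/5`. If one column vanishes and the other `u` is `±e₀` or `±e₁`, then `T`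
is the average of two signed permutation matrices. Either way `T` is not extreme.

Conversely let `T e₀ = u` with `u₀ u₁ ≠ 0`, `T e₁ = 0`, and `‖T ± S‖ ≤ 1`. Strict convexity of the
ℓ⁴ ball at `u` gives `S e₀ = 0`; then `‖u ± t S e₁‖⁴ ≤ ‖e₀ + t e₁‖⁴ = 1 + t⁴`, and the `t²` term
of the left side, `6 t² (u₀² s₀² + u₁² s₁²)` with `s = S e₁`, forces `S e₁ = 0`.
-/

lemma exists_pow_three_eq (a : ℝ) : ∃ α : ℝ, α ^ 3 = a := by
  obtain ha | ha := le_total 0 a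
  · exact ⟨a ^ (3⁻¹ : ℝ), by simpa using Real.rpow_inv_natCast_pow ha three_ne_zero⟩
  · refine ⟨-(-a) ^ (3⁻¹ : ℝ), ?_⟩
    have h := Real.rpow_inv_natCast_pow (neg_nonneg.2 ha) three_ne_zero
    push_cast at h
    rw [neg_pow, h]; ring

theorem Convex.mem_extremePoints_iff_forall_add_sub {E : Type*} [AddCommGroup E] [Module ℝ E]
    {A : Set E} (hA : Convex ℝ A) {x : E} :
    x ∈ A.extremePoints ℝ ↔ x ∈ A ∧ ∀ v, x + v ∈ A → x - v ∈ A → v = 0 := by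
  refine ⟨fun ⟨hx, h⟩ => ⟨hx, fun v hadd hsub => ?_⟩, fun ⟨hx, h⟩ => ⟨hx, ?_⟩⟩
  · exact sub_eq_self.1 (h hsub hadd (mem_openSegment_sub_add x v))
  rintro y hy z hz ⟨a, b, ha, hb, hab, rfl⟩
  have hc : 0 < min a b := lt_min ha hb
  have hadd : a • y + b • z + min a b • (y - z) ∈ A := by
    convert (hA hy hz (by positivity) (sub_nonneg.2 (min_le_right a b)) (by linarith) :
      (a + min a b) • y + (b - min a b) • z ∈ A) using 1
    module
  have hsub : a • y + b • z - min a b • (y - z) ∈ A := by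
    convert (hA hy hz (sub_nonneg.2 (min_le_left a b)) (by positivity) (by linarith) :
      (a - min a b) • y + (b + min a b) • z ∈ A) using 1
    module
  obtain rfl : y = z := sub_eq_zero.1 ((smul_eq_zero_iff_right hc.ne').1 (h _ hadd hsub))
  rw [← add_smul, hab, one_smul]

lemma notMem_extremePoints_closedBall_of_norm_add_le {E : Type*} [SeminormedAddCommGroup E]
    [NormedSpace ℝ E] {x v : E} (hv : v ≠ 0) (hadd : ‖x + v‖ ≤ 1) (hsub : ‖x - v‖ ≤ 1) :
    x ∉ (closedBall (0 : E) 1).extremePoints ℝ := fun hx =>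
  hv (((convex_closedBall 0 1).mem_extremePoints_iff_forall_add_sub.1 hx).2 v
    (mem_closedBall_zero_iff.2 hadd) (mem_closedBall_zero_iff.2 hsub))

lemma ContinuousLinearMap.opNorm_le_one_of_forall_norm_pow_le {E F : Type*}
    [SeminormedAddCommGroup E] [NormedSpace ℝ E] [SeminormedAddCommGroup F] [NormedSpace ℝ F]
    {T : E →L[ℝ] F} {n : ℕ} (hn : n ≠ 0) (h : ∀ x, ‖T x‖ ^ n ≤ ‖x‖ ^ n) : ‖T‖ ≤ 1 :=
  T.opNorm_le_bound zero_le_one fun x => by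
    rw [one_mul]; exact (pow_le_pow_iff_left₀ (norm_nonneg _) (norm_nonneg _) hn).1 (h x)

lemma LinearMap.exists_norm_eq_one_forall_apply_eq_smul {E F : Type*} [AddCommGroup E]
    [Module ℝ E] [NormedAddCommGroup F] [NormedSpace ℝ F] {f : E →ₗ[ℝ] F}
    (h : Module.rank ℝ (LinearMap.range f) = 1) :
    ∃ y : F, ‖y‖ = 1 ∧ ∀ x, ∃ a : ℝ, f x = a • y := by
  obtain ⟨v, hv, hspan⟩ := rank_eq_one_iff.1 h
  have hv' : ‖(v : F)‖ ≠ 0 := norm_ne_zero_iff.2 (by simpa using hv)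
  refine ⟨‖(v : F)‖⁻¹ • v, by rw [norm_smul, norm_inv, norm_norm, inv_mul_cancel₀ hv'],
    fun x => ?_⟩
  obtain ⟨r, hr⟩ := hspan ⟨f x, LinearMap.mem_range_self f x⟩
  refine ⟨r * ‖(v : F)‖, ?_⟩
  rw [smul_smul, mul_assoc, mul_inv_cancel₀ hv', mul_one, ← Submodule.coe_smul, hr]

namespace L4

noncomputable def vec (a b : ℝ) : L4 := (WithLp.equiv 4 (Fin 2 → ℝ)).symm ![a, b]

@[simp] lemma vec_apply_zero (a b : ℝ) : vec a b 0 = a := rfl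
@[simp] lemma vec_apply_one (a b : ℝ) : vec a b 1 = b := rfl

lemma ext {v w : L4} (h₀ : v 0 = w 0) (h₁ : v 1 = w 1) : v = w :=
  PiLp.ext (Fin.forall_fin_two.2 ⟨h₀, h₁⟩)

lemma eq_vec (v : L4) : v = vec (v 0) (v 1) := ext rfl rfl

lemma norm_pow_four (v : L4) : ‖v‖ ^ 4 = v 0 ^ 4 + v 1 ^ 4 := by
  rw [PiLp.norm_eq_of_nat 4 (by norm_num) v, Fin.sum_univ_two, Real.norm_eq_abs, Real.norm_eq_abs,
    pow_abs, pow_abs, abs_of_nonneg (by positivity), abs_of_nonneg (by positivity),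
    ← Real.rpow_natCast, ← Real.rpow_mul (by positivity)]
  norm_num

lemma norm_le_norm_iff {v w : L4} : ‖v‖ ≤ ‖w‖ ↔ v 0 ^ 4 + v 1 ^ 4 ≤ w 0 ^ 4 + w 1 ^ 4 := by
  rw [← pow_le_pow_iff_left₀ (norm_nonneg v) (norm_nonneg w) four_ne_zero, norm_pow_four,
    norm_pow_four]

lemma norm_eq_one_iff {v : L4} : ‖v‖ = 1 ↔ v 0 ^ 4 + v 1 ^ 4 = 1 := by
  rw [← norm_pow_four, pow_eq_one_iff_of_nonneg (norm_nonneg v) four_ne_zero]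

lemma norm_vec_one_zero : ‖vec 1 0‖ = 1 := norm_eq_one_iff.2 (by simp)

lemma norm_vec_zero_one : ‖vec 0 1‖ = 1 := norm_eq_one_iff.2 (by simp)

lemma eq_zero_of_norm_add_le_of_norm_sub_le {v w : L4} (hv : ‖v‖ = 1) (hadd : ‖v + w‖ ≤ 1)
    (hsub : ‖v - w‖ ≤ 1) : w = 0 := by
  rw [← hv, norm_le_norm_iff] at hadd hsub
  rw [norm_eq_one_iff] at hv
  simp only [PiLp.add_apply, PiLp.sub_apply] at hadd hsub
  -- `(a + b)⁴ + (a - b)⁴ = 2 a⁴ + 12 a² b² + 2 b⁴`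
  have h : w 0 ^ 4 + w 1 ^ 4 ≤ 0 := by
    nlinarith [sq_nonneg (v 0 * w 0), sq_nonneg (v 1 * w 1)]
  have h₀ : 0 ≤ w 0 ^ 4 := by positivity
  have h₁ : 0 ≤ w 1 ^ 4 := by positivity
  exact ext (by simpa using le_antisymm (by linarith) h₀)
    (by simpa using le_antisymm (by linarith) h₁)

lemma eq_zero_of_forall_norm_add_smul_pow_four_le {v w : L4} (hv₀ : v 0 ≠ 0) (hv₁ : v 1 ≠ 0)
    (hv : ‖v‖ = 1) (h : ∀ t : ℝ, ‖v + t • w‖ ^ 4 ≤ 1 + t ^ 4) : w = 0 := by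
  rw [norm_eq_one_iff] at hv
  set c := v 0 ^ 2 * w 0 ^ 2 + v 1 ^ 2 * w 1 ^ 2
  have hquad : ∀ t : ℝ, 6 * t ^ 2 * c ≤ t ^ 4 := fun t => by
    have hpos := h t
    have hneg := h (-t)
    simp only [norm_pow_four, PiLp.add_apply, PiLp.smul_apply, smul_eq_mul] at hpos hneg
    nlinarith [pow_two_nonneg (t ^ 2 * w 0 ^ 2), pow_two_nonneg (t ^ 2 * w 1 ^ 2)]
  have hc : c = 0 := by
    have hc0 : 0 ≤ c := by positivity
    have hsqrt := hquad √c
    rw [show √c ^ 4 = (√c ^ 2) ^ 2 by ring, Real.sq_sqrt hc0] at hsqrt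
    nlinarith
  have h₀ : v 0 ^ 2 * w 0 ^ 2 = 0 := by nlinarith [sq_nonneg (v 0 * w 0), sq_nonneg (v 1 * w 1)]
  have h₁ : v 1 ^ 2 * w 1 ^ 2 = 0 := by nlinarith [sq_nonneg (v 0 * w 0), sq_nonneg (v 1 * w 1)]
  exact ext (by simpa [hv₀] using h₀) (by simpa [hv₁] using h₁)

noncomputable def cols (u w : L4) : L4 →L[ℝ] L4 :=
  (PiLp.proj 4 (fun _ : Fin 2 => ℝ) 0).smulRight u +
    (PiLp.proj 4 (fun _ : Fin 2 => ℝ) 1).smulRight w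

@[simp] lemma cols_apply (u w x : L4) : cols u w x = x 0 • u + x 1 • w := rfl

lemma eq_cols (T : L4 →L[ℝ] L4) : T = cols (T (vec 1 0)) (T (vec 0 1)) := by
  ext1 x
  rw [cols_apply, ← map_smul, ← map_smul, ← map_add]
  congr 1
  exact ext (by simp) (by simp)

lemma eq_zero_of_apply_vec {S : L4 →L[ℝ] L4} (h₀ : S (vec 1 0) = 0) (h₁ : S (vec 0 1) = 0) :
    S = 0 := by
  rw [eq_cols S, h₀, h₁]; ext1 x; simp

lemma cols_add_cols (u w u' w' : L4) : cols u w + cols u' w' = cols (u + u') (w + w') := by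
  ext1 x; simp only [add_apply, cols_apply]; module

lemma cols_sub_cols (u w u' w' : L4) : cols u w - cols u' w' = cols (u - u') (w - w') := by
  ext1 x; simp only [sub_apply, cols_apply]; module

lemma norm_cols_zero_right (u : L4) : ‖cols u 0‖ = ‖u‖ := by
  refine le_antisymm ((cols u 0).opNorm_le_bound (norm_nonneg u) fun x => ?_) ?_
  · rw [cols_apply, smul_zero, add_zero, norm_smul, mul_comm]
    exact mul_le_mul_of_nonneg_left (PiLp.norm_apply_le x 0) (norm_nonneg u)
  · simpa [norm_vec_one_zero] using (cols u 0).le_opNorm (vec 1 0)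

lemma norm_cols_zero_left (w : L4) : ‖cols 0 w‖ = ‖w‖ := by
  refine le_antisymm ((cols 0 w).opNorm_le_bound (norm_nonneg w) fun x => ?_) ?_
  · rw [cols_apply, smul_zero, zero_add, norm_smul, mul_comm]
    exact mul_le_mul_of_nonneg_left (PiLp.norm_apply_le x 1) (norm_nonneg w)
  · simpa [norm_vec_zero_one] using (cols 0 w).le_opNorm (vec 0 1)

lemma opNorm_cols_le_one {u w : L4} (h : ∀ s t : ℝ, ‖s • u + t • w‖ ^ 4 ≤ s ^ 4 + t ^ 4) :
    ‖cols u w‖ ≤ 1 :=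
  ContinuousLinearMap.opNorm_le_one_of_forall_norm_pow_le four_ne_zero fun x => by
    rw [cols_apply, norm_pow_four x]; exact h _ _

noncomputable def swap (v : L4) : L4 := vec (v 1) (v 0)

lemma swap_ne_zero {v : L4} (hv : v ≠ 0) : swap v ≠ 0 := fun h =>
  hv (ext (by simpa [swap] using congrArg (· 1) h) (by simpa [swap] using congrArg (· 0) h))

lemma norm_smul_add_smul_swap_pow_four {u : L4} (hu : ‖u‖ = 1) (hu01 : u 0 * u 1 = 0)
    (s t : ℝ) : ‖s • u + t • swap u‖ ^ 4 = s ^ 4 + t ^ 4 := by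
  rw [norm_eq_one_iff] at hu
  simp only [norm_pow_four, PiLp.add_apply, PiLp.smul_apply, smul_eq_mul, swap, vec_apply_zero,
    vec_apply_one]
  rcases mul_eq_zero.1 hu01 with h | h <;> simp only [h] at hu ⊢ <;>
    linear_combination (s ^ 4 + t ^ 4) * hu

lemma cols_zero_right_notMem_extremePoints {u : L4} (hu : ‖u‖ = 1) (hu01 : u 0 * u 1 = 0) :
    cols u 0 ∉ (closedBall (0 : L4 →L[ℝ] L4) 1).extremePoints ℝ := by
  have hS : cols 0 (swap u) ≠ 0 := fun h => swap_ne_zero (norm_ne_zero_iff.1 (hu ▸ one_ne_zero))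
    (by simpa using congrArg (· (vec 0 1)) h)
  refine notMem_extremePoints_closedBall_of_norm_add_le hS ?_ ?_
  · rw [cols_add_cols, add_zero, zero_add]
    exact opNorm_cols_le_one fun s t => (norm_smul_add_smul_swap_pow_four hu hu01 s t).le
  · rw [cols_sub_cols, sub_zero, zero_sub]
    exact opNorm_cols_le_one fun s t => by
      simpa [Even.neg_pow (by decide : Even 4)] using
        (norm_smul_add_smul_swap_pow_four hu hu01 s (-t)).le

lemma cols_zero_left_notMem_extremePoints {u : L4} (hu : ‖u‖ = 1) (hu01 : u 0 * u 1 = 0) :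
    cols 0 u ∉ (closedBall (0 : L4 →L[ℝ] L4) 1).extremePoints ℝ := by
  have hS : cols (swap u) 0 ≠ 0 := fun h => swap_ne_zero (norm_ne_zero_iff.1 (hu ▸ one_ne_zero))
    (by simpa using congrArg (· (vec 1 0)) h)
  refine notMem_extremePoints_closedBall_of_norm_add_le hS ?_ ?_
  · rw [cols_add_cols, add_zero, zero_add]
    exact opNorm_cols_le_one fun s t => by
      rw [add_comm, add_comm (s ^ 4)]; exact (norm_smul_add_smul_swap_pow_four hu hu01 t s).le
  · rw [cols_sub_cols, sub_zero, zero_sub]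
    exact opNorm_cols_le_one fun s t => by
      rw [add_comm, add_comm (s ^ 4)]
      simpa [Even.neg_pow (by decide : Even 4)] using
        (norm_smul_add_smul_swap_pow_four hu hu01 t (-s)).le

noncomputable def perp (v : L4) : L4 := vec (-v 1 ^ 3) (v 0 ^ 3)

lemma perp_ne_zero {v : L4} (hv : v ≠ 0) : perp v ≠ 0 := fun h =>
  hv (ext (by simpa [perp] using congrArg (· 1) h) (by simpa [perp] using congrArg (· 0) h))

lemma norm_smul_add_smul_perp_pow_four_le {y : L4} (hy : ‖y‖ = 1) (u e : ℝ) :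
    ‖u • y + e • perp y‖ ^ 4 ≤ (u ^ 2 + 25 * e ^ 2) ^ 2 := by
  rw [norm_eq_one_iff] at hy
  simp only [norm_pow_four, PiLp.add_apply, PiLp.smul_apply, smul_eq_mul, perp, vec_apply_zero,
    vec_apply_one]
  set p := y 0
  set q := y 1
  have hpq : p ^ 2 * q ^ 2 ≤ 1 / 2 := by nlinarith [sq_nonneg (p ^ 2 - q ^ 2)]
  have h12 : p ^ 12 + q ^ 12 ≤ 1 := by
    have : p ^ 12 + q ^ 12 = (p ^ 4 + q ^ 4) ^ 3 - 3 * (p ^ 2 * q ^ 2) ^ 2 * (p ^ 4 + q ^ 4) := by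
      ring
    rw [this, hy]; nlinarith [pow_two_nonneg (p ^ 2 * q ^ 2)]
  have hcross : (p * q * (p ^ 8 - q ^ 8)) ^ 2 ≤ 1 := by
    have hdiff : (p ^ 4 - q ^ 4) ^ 2 ≤ 1 := by nlinarith [pow_two_nonneg (p ^ 2 * q ^ 2)]
    calc (p * q * (p ^ 8 - q ^ 8)) ^ 2
        = p ^ 2 * q ^ 2 * (p ^ 4 - q ^ 4) ^ 2 * (p ^ 4 + q ^ 4) ^ 2 := by ring
      _ ≤ 1 := by rw [hy]; nlinarith [mul_nonneg (pow_two_nonneg p) (pow_two_nonneg q)]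
  have hexp : (u * p + e * -q ^ 3) ^ 4 + (u * q + e * p ^ 3) ^ 4 =
      u ^ 4 * (p ^ 4 + q ^ 4) + 6 * (u ^ 2 * e ^ 2) * (p ^ 2 * q ^ 2) * (p ^ 4 + q ^ 4)
        + 4 * (u * e) * e ^ 2 * (p * q * (p ^ 8 - q ^ 8)) + e ^ 4 * (p ^ 12 + q ^ 12) := by ring
  have h₂ : 6 * (u ^ 2 * e ^ 2) * (p ^ 2 * q ^ 2) ≤ 3 * (u ^ 2 * e ^ 2) := by
    nlinarith [sq_nonneg (u * e)]
  have h₃ : 4 * (u * e) * e ^ 2 * (p * q * (p ^ 8 - q ^ 8)) ≤ 2 * (u ^ 2 * e ^ 2) + 2 * e ^ 4 := by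
    nlinarith [sq_nonneg (u * e - e ^ 2 * (p * q * (p ^ 8 - q ^ 8))),
      mul_nonneg (pow_two_nonneg (e ^ 2)) (sub_nonneg.2 hcross)]
  have h₄ : e ^ 4 * (p ^ 12 + q ^ 12) ≤ e ^ 4 := mul_le_of_le_one_right (by positivity) h12
  rw [hexp, hy]
  nlinarith [sq_nonneg (u * e), sq_nonneg (e ^ 2)]

lemma pow_four_add_pow_four_le_one {α β : ℝ} {y : L4} (hy : ‖y‖ = 1)
    (hT : ‖cols (α ^ 3 • y) (β ^ 3 • y)‖ ≤ 1) : α ^ 4 + β ^ 4 ≤ 1 := by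
  set s := α ^ 4 + β ^ 4
  have hs : 0 ≤ s := by positivity
  have happly : cols (α ^ 3 • y) (β ^ 3 • y) (vec α β) = s • y := by
    simp only [cols_apply, vec_apply_zero, vec_apply_one, s]; module
  have hle : s ^ 4 ≤ s := by
    have h := pow_le_pow_left₀ (norm_nonneg _)
      ((cols (α ^ 3 • y) (β ^ 3 • y)).le_of_opNorm_le hT (vec α β)) 4
    rwa [happly, norm_smul, hy, mul_one, Real.norm_of_nonneg hs, one_mul, norm_pow_four] at h
  by_contra! h
  exact (lt_self_pow₀ h (by norm_num : 1 < 4)).not_ge hle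

lemma sq_add_twentyfive_mul_sq_sq_le {α β ε : ℝ} (hαβ : α ^ 4 + β ^ 4 ≤ 1)
    (hε : ε ^ 2 = α ^ 2 * β ^ 2 / 25) (x₀ x₁ : ℝ) :
    ((α ^ 3 * x₀ + β ^ 3 * x₁) ^ 2 + 25 * (ε * (β * x₀ - α * x₁)) ^ 2) ^ 2
      ≤ x₀ ^ 4 + x₁ ^ 4 := by
  have hs : 0 ≤ α ^ 4 + β ^ 4 := by positivity
  have hid : (α ^ 3 * x₀ + β ^ 3 * x₁) ^ 2 + 25 * (ε * (β * x₀ - α * x₁)) ^ 2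
      = (α ^ 4 + β ^ 4) * (α ^ 2 * x₀ ^ 2 + β ^ 2 * x₁ ^ 2) := by
    linear_combination 25 * (β * x₀ - α * x₁) ^ 2 * hε
  have hCS : (α ^ 2 * x₀ ^ 2 + β ^ 2 * x₁ ^ 2) ^ 2 ≤ (α ^ 4 + β ^ 4) * (x₀ ^ 4 + x₁ ^ 4) := by
    nlinarith [sq_nonneg (α ^ 2 * x₁ ^ 2 - β ^ 2 * x₀ ^ 2)]
  rw [hid]
  calc ((α ^ 4 + β ^ 4) * (α ^ 2 * x₀ ^ 2 + β ^ 2 * x₁ ^ 2)) ^ 2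
      ≤ (α ^ 4 + β ^ 4) ^ 2 * ((α ^ 4 + β ^ 4) * (x₀ ^ 4 + x₁ ^ 4)) := by
        rw [mul_pow]; gcongr
    _ = (α ^ 4 + β ^ 4) ^ 3 * (x₀ ^ 4 + x₁ ^ 4) := by ring
    _ ≤ x₀ ^ 4 + x₁ ^ 4 := mul_le_of_le_one_left (by positivity) (pow_le_one₀ hs hαβ)

lemma opNorm_cols_add_perp_le_one {α β ε : ℝ} (hαβ : α ^ 4 + β ^ 4 ≤ 1)
    (hε : ε ^ 2 = α ^ 2 * β ^ 2 / 25) {y : L4} (hy : ‖y‖ = 1) :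
    ‖cols (α ^ 3 • y + (ε * β) • perp y) (β ^ 3 • y - (ε * α) • perp y)‖ ≤ 1 :=
  ContinuousLinearMap.opNorm_le_one_of_forall_norm_pow_le four_ne_zero fun x => by
    have happly : cols (α ^ 3 • y + (ε * β) • perp y) (β ^ 3 • y - (ε * α) • perp y) x
        = (α ^ 3 * x 0 + β ^ 3 * x 1) • y + (ε * (β * x 0 - α * x 1)) • perp y := by
      rw [cols_apply]; module
    rw [happly, norm_pow_four x]
    exact (norm_smul_add_smul_perp_pow_four_le hy _ _).trans
      (sq_add_twentyfive_mul_sq_sq_le hαβ hε _ _)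

lemma cols_smul_notMem_extremePoints {a b : ℝ} (ha : a ≠ 0) (hb : b ≠ 0) {y : L4}
    (hy : ‖y‖ = 1) (hT : ‖cols (a • y) (b • y)‖ ≤ 1) :
    cols (a • y) (b • y) ∉ (closedBall (0 : L4 →L[ℝ] L4) 1).extremePoints ℝ := by
  obtain ⟨α, rfl⟩ := exists_pow_three_eq a
  obtain ⟨β, rfl⟩ := exists_pow_three_eq b
  have hαβ := pow_four_add_pow_four_le_one hy hT
  set ε := α * β / 5
  have hεβ : ε * β ≠ 0 := by
    have : α ≠ 0 := by rintro rfl; simp at ha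
    have : β ≠ 0 := by rintro rfl; simp at hb
    positivity
  have hS : cols ((ε * β) • perp y) (-((ε * α) • perp y)) ≠ 0 := fun h =>
    smul_ne_zero hεβ (perp_ne_zero (norm_ne_zero_iff.1 (hy ▸ one_ne_zero)))
      (by simpa using congrArg (· (vec 1 0)) h)
  refine notMem_extremePoints_closedBall_of_norm_add_le hS ?_ ?_
  · rw [cols_add_cols, ← sub_eq_add_neg]
    exact opNorm_cols_add_perp_le_one hαβ (by ring) hy
  · rw [cols_sub_cols]
    refine (congrArg norm (congrArg₂ cols ?_ ?_)).trans_le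
      (opNorm_cols_add_perp_le_one (ε := -ε) hαβ (by ring) hy) <;> module

lemma mem_extremePoints_of_apply_eq {T : L4 →L[ℝ] L4} (hT : ‖T‖ ≤ 1) {e f : L4} {x₁ y₁ : ℝ}
    (hxy : x₁ * y₁ ≠ 0) (hsum : x₁ ^ 4 + y₁ ^ 4 = 1) (he : T e = vec x₁ y₁) (hf : T f = 0)
    (hef : ∀ t : ℝ, ‖e + t • f‖ ^ 4 = 1 + t ^ 4)
    (hspan : ∀ S : L4 →L[ℝ] L4, S e = 0 → S f = 0 → S = 0) :
    T ∈ (closedBall (0 : L4 →L[ℝ] L4) 1).extremePoints ℝ := by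
  have hv : ‖vec x₁ y₁‖ = 1 := norm_eq_one_iff.2 (by simpa using hsum)
  have hne : ‖e‖ = 1 :=
    (pow_eq_one_iff_of_nonneg (norm_nonneg e) four_ne_zero).1 (by simpa using hef 0)
  rw [(convex_closedBall _ _).mem_extremePoints_iff_forall_add_sub]
  refine ⟨mem_closedBall_zero_iff.2 hT, fun S hadd hsub => ?_⟩
  rw [mem_closedBall_zero_iff] at hadd hsub
  have hSe : S e = 0 := by
    refine eq_zero_of_norm_add_le_of_norm_sub_le hv ?_ ?_
    · simpa [he, hne] using (T + S).le_of_opNorm_le hadd e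
    · simpa [he, hne] using (T - S).le_of_opNorm_le hsub e
  refine hspan S hSe (eq_zero_of_forall_norm_add_smul_pow_four_le
    (by simpa using left_ne_zero_of_mul hxy) (by simpa using right_ne_zero_of_mul hxy) hv
    fun t => ?_)
  have happly : (T + S) (e + t • f) = vec x₁ y₁ + t • S f := by simp [he, hf, hSe]
  rw [← hef, ← happly]
  exact pow_le_pow_left₀ (norm_nonneg _)
    (by simpa using (T + S).le_of_opNorm_le hadd (e + t • f)) 4

lemma exists_eq_vec_of_mem_extremePoints {T : L4 →L[ℝ] L4}
    (hrank : Module.rank ℝ (LinearMap.range (T : L4 →ₗ[ℝ] L4)) = 1) (hT : ‖T‖ = 1)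
    (hext : T ∈ (closedBall (0 : L4 →L[ℝ] L4) 1).extremePoints ℝ) :
    ∃ x₁ y₁ : ℝ, x₁ * y₁ ≠ 0 ∧ x₁ ^ 4 + y₁ ^ 4 = 1 ∧
      ((T (vec 1 0) = vec x₁ y₁ ∧ T (vec 0 1) = 0) ∨
        (T (vec 1 0) = 0 ∧ T (vec 0 1) = vec x₁ y₁)) := by
  obtain ⟨y, hy, hTy⟩ := LinearMap.exists_norm_eq_one_forall_apply_eq_smul hrank
  obtain ⟨a, ha⟩ := hTy (vec 1 0)
  obtain ⟨b, hb⟩ := hTy (vec 0 1)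
  simp only [ContinuousLinearMap.coe_coe] at ha hb
  have hcols : T = cols (a • y) (b • y) := by rw [← ha, ← hb]; exact eq_cols T
  rw [hcols] at hext hT
  rcases eq_or_ne a 0 with rfl | ha0
  · rw [zero_smul] at ha hext hT
    rw [norm_cols_zero_left] at hT
    have hu01 : (b • y) 0 * (b • y) 1 ≠ 0 := fun h =>
      cols_zero_left_notMem_extremePoints hT h hext
    exact ⟨_, _, hu01, norm_eq_one_iff.1 hT, Or.inr ⟨ha, hb.trans (eq_vec _)⟩⟩
  rcases eq_or_ne b 0 with rfl | hb0
  · rw [zero_smul] at hb hext hT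
    rw [norm_cols_zero_right] at hT
    have hu01 : (a • y) 0 * (a • y) 1 ≠ 0 := fun h =>
      cols_zero_right_notMem_extremePoints hT h hext
    exact ⟨_, _, hu01, norm_eq_one_iff.1 hT, Or.inl ⟨ha.trans (eq_vec _), hb⟩⟩
  exact absurd hext (cols_smul_notMem_extremePoints ha0 hb0 hy hT.le)

end L4

open L4 in
theorem stmt10 (T : L4 →L[ℝ] L4)
    (hrank : Module.rank ℝ (LinearMap.range (T : L4 →ₗ[ℝ] L4)) = 1)
    (hT : ‖T‖ = 1) :
    T ∈ Set.extremePoints ℝ (closedBall (0 : L4 →L[ℝ] L4) 1) ↔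
      ∃ x₁ y₁ : ℝ, x₁ * y₁ ≠ 0 ∧ x₁ ^ 4 + y₁ ^ 4 = 1 ∧
        ((T ((WithLp.equiv 4 (Fin 2 → ℝ)).symm ![1, 0]) =
            (WithLp.equiv 4 (Fin 2 → ℝ)).symm ![x₁, y₁] ∧
          T ((WithLp.equiv 4 (Fin 2 → ℝ)).symm ![0, 1]) = 0) ∨
         (T ((WithLp.equiv 4 (Fin 2 → ℝ)).symm ![1, 0]) = 0 ∧
          T ((WithLp.equiv 4 (Fin 2 → ℝ)).symm ![0, 1]) =
            (WithLp.equiv 4 (Fin 2 → ℝ)).symm ![x₁, y₁])) := by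
  change _ ↔ ∃ x₁ y₁ : ℝ, x₁ * y₁ ≠ 0 ∧ x₁ ^ 4 + y₁ ^ 4 = 1 ∧
    ((T (vec 1 0) = vec x₁ y₁ ∧ T (vec 0 1) = 0) ∨ (T (vec 1 0) = 0 ∧ T (vec 0 1) = vec x₁ y₁))
  refine ⟨exists_eq_vec_of_mem_extremePoints hrank hT, ?_⟩
  rintro ⟨x₁, y₁, hxy, hsum, ⟨h₀, h₁⟩ | ⟨h₀, h₁⟩⟩
  · refine mem_extremePoints_of_apply_eq hT.le hxy hsum h₀ h₁ (fun t => ?_)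
      fun S hS₀ hS₁ => eq_zero_of_apply_vec hS₀ hS₁
    simp [norm_pow_four]
  · refine mem_extremePoints_of_apply_eq hT.le hxy hsum h₁ h₀ (fun t => ?_)
      fun S hS₁ hS₀ => eq_zero_of_apply_vec hS₀ hS₁
    simp [norm_pow_four, add_comm]
end
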